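/- arXiv:1908.09954 — 12 statements merged into one kernel-verified Lean document; each statement's English description precedes it below -/
import Mathlib

section
/- Given an abelian group (A,+) and an element a ∈ A with a + a = 0, the ternary operation [xyz] := x − y + z + a makes A into a knot-theoretic ternary group (an associative ternary quasigroup satisfying the conditions LN and RN), and the skew element of every x ∈ A equals x + a. -/
/-- A ternary quasigroup: each of the equations [zab]=c, [azb]=c, [abz]=c
has a unique solution `z`. -/
def TernaryQuasigroup {X : Type*} (t : X → X → X → X) : Prop :=
  ∀ a b c : X, (∃! z, t z a b = c) ∧ (∃! z, t a z b = c) ∧ (∃! z, t a b z = c)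

/-- Associativity of a ternary operation: [[abc]de]=[a[bcd]e]=[ab[cde]]. -/
def TernaryAssoc {X : Type*} (t : X → X → X → X) : Prop :=
  ∀ a b c d e : X,
    t (t a b c) d e = t a (t b c d) e ∧ t a (t b c d) e = t a b (t c d e)

/-- Para-associativity of a ternary operation: [[abc]de]=[a[dcb]e]=[ab[cde]]. -/
def ParaAssoc {X : Type*} (t : X → X → X → X) : Prop :=
  ∀ a b c d e : X,
    t (t a b c) d e = t a (t d c b) e ∧ t a (t d c b) e = t a b (t c d e)

/-- The condition LN: [ab[bcd]]=[a[abc][[abc]cd]]. -/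
def CondLN {X : Type*} (t : X → X → X → X) : Prop :=
  ∀ a b c d : X, t a b (t b c d) = t a (t a b c) (t (t a b c) c d)

/-- The condition RN: [[abc]cd]=[[ab[bcd]][bcd]d]. -/
def CondRN {X : Type*} (t : X → X → X → X) : Prop :=
  ∀ a b c d : X, t (t a b c) c d = t (t a b (t b c d)) (t b c d) d

/-- Given an abelian group (A,+) and a ∈ A with a + a = 0, the operation
[xyz] := x - y + z + a makes A a knot-theoretic ternary group, with skew x̄ = x + a. -/
theorem stmt_1 {A : Type*} [AddCommGroup A] (a : A) (ha : a + a = 0) :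
    TernaryQuasigroup (fun x y z : A => x - y + z + a) ∧
    TernaryAssoc (fun x y z : A => x - y + z + a) ∧
    CondLN (fun x y z : A => x - y + z + a) ∧
    CondRN (fun x y z : A => x - y + z + a) ∧
    (∀ x z : A, x - z + x + a = x ↔ z = x + a) := by
  have h2 : (2:ℤ) • a = 0 := by rw [two_smul]; exact ha
  refine ⟨?_, ?_, ?_, ?_, ?_⟩
  · intro b c d
    refine ⟨⟨d - a - c + b, by show _ - _ + _ + _ = _; abel,
        fun z hz => by simp only at hz; rw [← hz]; abel⟩,
      ⟨b + c + a - d, by show _ - _ + _ + _ = _; abel,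
        fun z hz => by simp only at hz; rw [← hz]; abel⟩,
      ⟨d - a + c - b, by show _ - _ + _ + _ = _; abel,
        fun z hz => by simp only at hz; rw [← hz]; abel⟩⟩
  · intro b c d e f
    constructor <;> · simp only; abel_nf; try simp [h2]
  · intro b c d e; simp only; abel_nf; try simp [h2]
  · intro b c d e; simp only; abel_nf; try simp [h2]
  · intro x z
    constructor
    · intro h
      have h3 : z = x - (x - z + x + a) + x + a := by abel
      rw [h] at h3; rw [h3]; abel
    · intro h; rw [h]; abel_nf; try simp [h2]
end

section
/- In any flock (X,[ ]), the skew element of a product is the product of the skew elements: for all x, y, z ∈ X, the skew element of [xyz] equals [x̄ ȳ z̄]. -/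
/-- In any flock, the skew of a product is the product of the skews:
the skew of [xyz] equals [x̄ ȳ z̄]. -/
theorem stmt_5 {X : Type*} (t : X → X → X → X) (sk : X → X)
    (hQ : TernaryQuasigroup t) (hP : ParaAssoc t)
    (hsk : ∀ x : X, t x (sk x) x = x) :
    ∀ x y z : X, sk (t x y z) = t (sk x) (sk y) (sk z) := by
  -- cancellation: [b a ā] = b
  have L2 : ∀ a b : X, t b a (sk a) = b := by
    intro a b
    have h := hP a (sk a) a b a
    -- [[a ā a] b a] = [a [b a ā] a]
    rw [hsk a] at h
    have h1 : t a (t b a (sk a)) a = t a b a := h.1.symm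
    obtain ⟨z, hz, huniq⟩ := (hQ a a (t a b a)).2.1
    exact (huniq _ h1).trans (huniq _ rfl).symm
  have L1 : ∀ a b : X, t (sk a) a b = b := by
    intro a b
    have h := (hP a b (sk a) a a).2.symm
    -- [a [a ā b] a] = [a b [ā a a]]... use other direction:
    -- [a [d c b] e] = [a b [c d e]] with a:=a, b:=b, c:=c, d:=c̄ ... redo:
    -- take hP a b c (sk c) c : t (t a b c) ... not what we want. Use:
    have h' := (hP a b a (sk a) a).2
    -- t a (t (sk a) a b) a = t a b (t a (sk a) a)
    rw [hsk a] at h'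
    have h1 : t a (t (sk a) a b) a = t a b a := h'
    obtain ⟨z, hz, huniq⟩ := (hQ a a (t a b a)).2.1
    exact (huniq _ h1).trans (huniq _ rfl).symm
  -- skew of skew: [ā a ā] = ā
  have Lss : ∀ a : X, t (sk a) a (sk a) = sk a := fun a => L1 a (sk a)
  -- [a ā b] = b and [b ā a] = b
  have L1' : ∀ a b : X, t a (sk a) b = b := by
    intro a b
    have h' := (hP (sk a) b (sk a) a (sk a)).2
    rw [Lss a] at h'
    have h1 : t (sk a) (t a (sk a) b) (sk a) = t (sk a) b (sk a) := h'
    obtain ⟨z, hz, huniq⟩ := (hQ (sk a) (sk a) (t (sk a) b (sk a))).2.1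
    exact (huniq _ h1).trans (huniq _ rfl).symm
  have L2' : ∀ a b : X, t b (sk a) a = b := by
    intro a b
    have h := hP (sk a) a (sk a) b (sk a)
    rw [Lss a] at h
    have h1 : t (sk a) (t b (sk a) a) (sk a) = t (sk a) b (sk a) := h.1.symm
    obtain ⟨z, hz, huniq⟩ := (hQ (sk a) (sk a) (t (sk a) b (sk a))).2.1
    exact (huniq _ h1).trans (huniq _ rfl).symm
  intro x y z
  set A := t x y z with hA
  set B := t (sk x) (sk y) (sk z) with hB
  -- main computation : [A B A] = A
  have key : t A B A = A := by
    have h1 : t A B A = t x (t B z y) A := (hP x y z B A).1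
    have h2 : t B z y = t (sk x) (sk y) y := by
      have := (hP (sk x) (sk y) (sk z) z y).1.trans (hP (sk x) (sk y) (sk z) z y).2
      -- [[x̄ ȳ z̄] z y] = [x̄ ȳ [z̄ z y]]
      rw [this, L1 z y]
    have h3 : t x (t (sk x) (sk y) y) x = x := by
      have h := (hP x y (sk y) (sk x) x).2
      -- t x (t (sk x) (sk y) y) x = t x y (t (sk y) (sk x) x)
      rw [L2' x (sk y)] at h
      rw [h, L2 y x]
    have h4 : t x (t (sk x) (sk y) y) A = t (t x (t (sk x) (sk y) y) x) y z := by
      rw [hA]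
      exact ((hP x (t (sk x) (sk y) y) x y z).1.trans
        (hP x (t (sk x) (sk y) y) x y z).2).symm
    rw [h1, h2, h4, h3]
  -- uniqueness of the skew element of A
  obtain ⟨w, hw, huniq⟩ := (hQ A A A).2.1
  exact (huniq _ (hsk A)).trans (huniq _ key).symm
end

section
/- In a knot-theoretic flock (X,[ ]) (a flock satisfying the conditions LN and RN), every element is special; more precisely, for all a, b ∈ X one has [aab] = b̄ = [baa], where b̄ is the skew element of b. In particular [aax] = [xaa] for all a, x ∈ X. -/
/-- In a knot-theoretic flock every element is special: [aab] = b̄ = [baa],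
and in particular [aax] = [xaa]. -/
theorem stmt_6 {X : Type*} (t : X → X → X → X) (sk : X → X)
    (hQ : TernaryQuasigroup t) (hP : ParaAssoc t)
    (hLN : CondLN t) (hRN : CondRN t)
    (hsk : ∀ x : X, t x (sk x) x = x) :
    (∀ a b : X, t a a b = sk b ∧ t b a a = sk b) ∧
    (∀ a x : X, t a a x = t x a a) := by

  -- cancellation and solvability facts from the quasigroup axioms
  have inj1 : ∀ b c z z' : X, t z b c = t z' b c → z = z' := by
    intro b c z z' h
    exact ((hQ b c (t z' b c)).1).unique h rfl
  have inj3 : ∀ a b z z' : X, t a b z = t a b z' → z = z' := by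
    intro a b z z' h
    exact ((hQ a b (t a b z')).2.2).unique h rfl
  have surj1 : ∀ b c u : X, ∃ a, t a b c = u := fun b c u => ((hQ b c u).1).exists
  have surj3 : ∀ a b u : X, ∃ c, t a b c = u := fun a b u => ((hQ a b u).2.2).exists
  -- ha1 : t a x x = t a a a
  have ha1 : ∀ a x : X, t a x x = t a a a := by
    intro a x
    obtain ⟨c, hc⟩ := surj3 a a x
    have h := hLN a a c c
    have l1 : t a a (t a c c) = t (t a a a) c c := by
      have h1 := hP a a a c c
      exact (h1.1.trans h1.2).symm
    have l2 : t a (t a a c) (t (t a a c) c c) = t (t a (t a a c) (t a a c)) c c := by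
      have h2 := hP a (t a a c) (t a a c) c c
      exact (h2.1.trans h2.2).symm
    have key : t (t a a a) c c = t (t a (t a a c) (t a a c)) c c := by
      rw [← l1, ← l2]; exact h
    have key2 : t a a a = t a (t a a c) (t a a c) := inj1 c c _ _ key
    rw [hc] at key2
    exact key2.symm
  -- ha2 : t x x d = t d d d
  have ha2 : ∀ x d : X, t x x d = t d d d := by
    intro x d
    obtain ⟨b, hb⟩ := surj1 d d x
    have h := hRN d b d d
    have l1 : t (t d b d) d d = t d b (t d d d) := by
      have h1 := hP d b d d d
      exact h1.1.trans h1.2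
    have l2 : t (t d b (t b d d)) (t b d d) d = t d b (t (t b d d) (t b d d) d) := by
      have h2 := hP d b (t b d d) (t b d d) d
      exact h2.1.trans h2.2
    have key : t d b (t d d d) = t d b (t (t b d d) (t b d d) d) := by
      rw [← l1, ← l2]; exact h
    have key2 : t d d d = t (t b d d) (t b d d) d := inj3 d b _ _ key
    rw [hb] at key2
    exact key2.symm
  -- cube and its injectivity
  set c : X → X := fun x => t x x x with hc
  have hcx : ∀ x : X, c x = t x x x := fun x => rfl
  have cinj : ∀ a b : X, c a = c b → a = b := by
    intro a b h
    apply inj3 a a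
    rw [ha2 a a, ha2 a b]
    exact h
  -- e1 : c x = t (c x) (sk x) x
  have e1 : ∀ x : X, c x = t (c x) (sk x) x := by
    intro x
    have h := hP x x x (sk x) x
    have : t (t x x x) (sk x) x = t x x (t x (sk x) x) := h.1.trans h.2
    rw [hsk x] at this
    exact this.symm
  -- claim A : t (sk x) (c x) x = c (c (sk x))
  have claimA : ∀ x : X, t (sk x) (c x) x = c (c (sk x)) := by
    intro x
    have h := hP (sk x) x x x x
    have : t (sk x) (t x x x) x = t (t (sk x) x x) x x := h.1.symm
    rw [ha1 (sk x) x] at this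
    calc t (sk x) (c x) x = t (t (sk x) (sk x) (sk x)) x x := this
      _ = t (c (sk x)) x x := rfl
      _ = c (c (sk x)) := ha1 _ x
  -- claim B : c (c x) = c (c (c (sk x)))
  have claimB : ∀ x : X, c (c x) = c (c (c (sk x))) := by
    intro x
    -- t x (c x) x = c (c x)
    have hB1 : t x (c x) x = c (c x) := by
      have h := hP x x x x x
      have h' : t x (t x x x) x = t x x (t x x x) := h.2
      rw [ha2 x (t x x x)] at h'
      exact h'
    -- t x (c x) x = c (t (sk x) (c x) x)
    have hB2 : t x (c x) x = c (t (sk x) (c x) x) := by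
      have h := hP x x (sk x) (c x) x
      have h' : t x (t (c x) (sk x) x) x = t x x (t (sk x) (c x) x) := h.2
      rw [← e1 x] at h'
      rw [h', ha2 x (t (sk x) (c x) x)]
    rw [← hB1, hB2, claimA x]
  -- x = c (sk x)
  have skc : ∀ x : X, c (sk x) = x := by
    intro x
    exact (cinj _ _ (cinj _ _ (claimB x))).symm
  -- c (c b) = b
  have cc : ∀ b : X, c (c b) = b := by
    intro b
    have h := hP (sk b) (sk b) (sk b) (sk b) b
    have h' : t (t (sk b) (sk b) (sk b)) (sk b) b
        = t (sk b) (sk b) (t (sk b) (sk b) b) := h.1.trans h.2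
    -- LHS = t (c (sk b)) (sk b) b = t b (sk b) b = b
    have lhs : t (t (sk b) (sk b) (sk b)) (sk b) b = b := by
      have : t (sk b) (sk b) (sk b) = c (sk b) := rfl
      rw [this, skc b, hsk b]
    -- RHS = c (c b)
    have rhs : t (sk b) (sk b) (t (sk b) (sk b) b) = c (c b) := by
      rw [ha2 (sk b) b, ha2 (sk b) (t b b b)]
    rw [lhs, rhs] at h'
    exact h'.symm
  -- sk b = c b
  have skeq : ∀ b : X, sk b = c b := by
    intro b
    apply cinj
    rw [skc b, cc b]
  refine ⟨fun a b => ⟨?_, ?_⟩, fun a x => ?_⟩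
  · rw [ha2 a b, skeq b]
  · rw [ha1 b a, skeq b]
  · rw [ha2 a x, ha1 x a]
end

section
/- A flock (X,[ ]) in which [aab] = b̄ = [baa] holds for all a, b ∈ X (where b̄ is the skew element of b) is knot-theoretic, i.e., it satisfies both the condition LN and the condition RN. -/
/-- A flock in which [aab] = b̄ = [baa] for all a, b is knot-theoretic:
it satisfies LN and RN. -/
theorem stmt_7 {X : Type*} (t : X → X → X → X) (sk : X → X)
    (hQ : TernaryQuasigroup t) (hP : ParaAssoc t)
    (hsk : ∀ x : X, t x (sk x) x = x)
    (h : ∀ a b : X, t a a b = sk b ∧ t b a a = sk b) :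
    CondLN t ∧ CondRN t := by
  constructor
  · intro a b c d
    set u := t a b c with hu
    have h1 : t a b (t b c d) = t (sk a) c d := by
      have := hP a b b c d
      rw [← (this.1.trans this.2), (h b a).2]
    have h2 : t a u (t u c d) = t (sk a) c d := by
      have := hP a u u c d
      rw [← (this.1.trans this.2), (h u a).2]
    rw [h1, h2]
  · intro a b c d
    set v := t b c d with hv
    have h1 : t (t a b c) c d = t a (sk b) d := by
      rw [(hP a b c c d).1, (h c b).1]
    have h2 : t (t a b v) v d = t a (sk b) d := by
      rw [(hP a b v v d).1, (h v b).1]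
    rw [h1, h2]
end

section
/- If (X,[ ]) is a knot-theoretic flock in which every element equals its own skew element (x̄ = x for all x ∈ X), then (X,[ ]) is a heap, i.e., [aax] = x = [xaa] for all a, x ∈ X. -/
/-- A knot-theoretic flock in which every element is its own skew element
is a heap: [aax] = x = [xaa]. -/
theorem stmt_8 {X : Type*} (t : X → X → X → X) (sk : X → X)
    (hQ : TernaryQuasigroup t) (hP : ParaAssoc t)
    (hLN : CondLN t) (hRN : CondRN t)
    (hsk : ∀ x : X, t x (sk x) x = x)
    (hself : ∀ x : X, sk x = x) :
    ∀ a x : X, t a a x = x ∧ t x a a = x := by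
  have hid : ∀ a : X, t a a a = a := by
    intro a
    have := hsk a
    rwa [hself a] at this
  intro a x
  constructor
  · -- t a a (t a a x) = t (t a a a) a x = t a a x, cancel in third slot
    have h1 : t a a (t a a x) = t a a x := by
      have := ((hP a a a a x).1.trans (hP a a a a x).2).symm
      rwa [hid a] at this
    obtain ⟨z, hz, huniq⟩ := (hQ a a (t a a x)).2.2
    exact (huniq (t a a x) h1).trans (huniq x rfl).symm
  · have h1 : t (t x a a) a a = t x a a := by
    -- t (t x a a) a a = t x (t a a a) a = t x a a
      have := (hP x a a a a).1
      rwa [hid a] at this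
    obtain ⟨z, hz, huniq⟩ := (hQ a a (t x a a)).1
    exact (huniq (t x a a) h1).trans (huniq x rfl).symm
end

section
/- Given a binary group (X,·) and an element b in the center of (X,·) with b·b = e, the ternary operation [xyz] := x·y⁻¹·z·b makes X into a knot-theoretic flock: it is a ternary quasigroup, it is para-associative, and it satisfies the conditions LN and RN. -/
/-- Given a group (X,·) and a central element b with b·b = e, the operation
[xyz] := x·y⁻¹·z·b makes X a knot-theoretic flock. -/
theorem stmt_10 {X : Type*} [Group X] (b : X)
    (hb : ∀ x : X, b * x = x * b) (hbb : b * b = 1) :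
    TernaryQuasigroup (fun x y z : X => x * y⁻¹ * z * b) ∧
    ParaAssoc (fun x y z : X => x * y⁻¹ * z * b) ∧
    CondLN (fun x y z : X => x * y⁻¹ * z * b) ∧
    CondRN (fun x y z : X => x * y⁻¹ * z * b) := by
  have hbi : b⁻¹ = b := by rw [inv_eq_iff_mul_eq_one, hbb]
  refine ⟨fun a c d => ⟨⟨d * b * c⁻¹ * a, ?_, fun y hy => ?_⟩,
      ⟨c * b * d⁻¹ * a, ?_, fun y hy => ?_⟩,
      ⟨c * a⁻¹ * d * b, ?_, fun y hy => ?_⟩⟩, fun a c d e f => ⟨?_, ?_⟩,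
      fun a c d e => ?_, fun a c d e => ?_⟩
  case refine_2 =>
    rw [← hy]
    simp only [mul_inv_rev, hbi, hb, mul_assoc, hbb, one_mul, mul_one, inv_inv,
      mul_inv_cancel_left, inv_mul_cancel_left, mul_inv_cancel, inv_mul_cancel]
  case refine_6 =>
    rw [← hy]
    simp only [mul_inv_rev, hbi, hb, mul_assoc, hbb, one_mul, mul_one, inv_inv,
      mul_inv_cancel_left, inv_mul_cancel_left, mul_inv_cancel, inv_mul_cancel]
  case refine_4 =>
    have h2 : y⁻¹ = a⁻¹ * (d * (b * c⁻¹)) := by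
      rw [← hy]
      simp only [mul_inv_rev, hbi, hb, mul_assoc, hbb, one_mul, mul_one, inv_inv,
        mul_inv_cancel_left, inv_mul_cancel_left, mul_inv_cancel, inv_mul_cancel]
    rw [← inv_inv y, h2]
    simp only [mul_inv_rev, hbi, hb, mul_assoc, hbb, one_mul, mul_one, inv_inv,
      mul_inv_cancel_left, inv_mul_cancel_left, mul_inv_cancel, inv_mul_cancel]
  all_goals
    simp only [mul_inv_rev, hbi, hb, mul_assoc, hbb, one_mul, mul_one, inv_inv,
      mul_inv_cancel_left, inv_mul_cancel_left, mul_inv_cancel, inv_mul_cancel]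
end

section
/- Let F((X₁,·),b₁) and F((X₂,*),b₂) be knot-theoretic flocks determined by groups (X₁,·), (X₂,*) and central elements b₁, b₂ with b₁·b₁ = e₁ and b₂*b₂ = e₂. If h : X₁ → X₂ is an isomorphism of the ternary groupoids (h is bijective and h([xyz]₁) = [h(x) h(y) h(z)]₂ for all x, y, z), then the map f : X₁ → X₂ defined by f(x) = h(x) * (h(b₁))⁻¹ * b₂ is a group isomorphism from (X₁,·) to (X₂,*) satisfying f(b₁) = b₂. -/
/-- If h is an isomorphism of the ternary groupoids F((X₁,·),b₁) and F((X₂,*),b₂),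
then f(x) := h(x) * (h(b₁))⁻¹ * b₂ is a group isomorphism with f(b₁) = b₂. -/
theorem stmt_14 {X₁ X₂ : Type*} [Group X₁] [Group X₂] (b₁ : X₁) (b₂ : X₂)
    (hb₁ : ∀ x : X₁, b₁ * x = x * b₁) (hbb₁ : b₁ * b₁ = 1)
    (hb₂ : ∀ x : X₂, b₂ * x = x * b₂) (hbb₂ : b₂ * b₂ = 1)
    (h : X₁ → X₂) (hbij : Function.Bijective h)
    (hhom : ∀ x y z : X₁, h (x * y⁻¹ * z * b₁) = h x * (h y)⁻¹ * h z * b₂) :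
    Function.Bijective (fun x : X₁ => h x * (h b₁)⁻¹ * b₂) ∧
    (∀ x y : X₁, h (x * y) * (h b₁)⁻¹ * b₂ =
      (h x * (h b₁)⁻¹ * b₂) * (h y * (h b₁)⁻¹ * b₂)) ∧
    h b₁ * (h b₁)⁻¹ * b₂ = b₂ := by
  have hinv₁ : b₁⁻¹ = b₁ := inv_eq_of_mul_eq_one_right hbb₁
  refine ⟨?_, ?_, by simp⟩
  · have : (fun x : X₁ => h x * (h b₁)⁻¹ * b₂)
        = (fun y : X₂ => y * ((h b₁)⁻¹ * b₂)) ∘ h := by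
      funext x; simp [mul_assoc]
    rw [this]
    exact (Equiv.mulRight ((h b₁)⁻¹ * b₂)).bijective.comp hbij
  · intro x y
    have key : h (x * y) = h x * (h b₁)⁻¹ * h y * b₂ := by
      have e1 : x * b₁⁻¹ * y * b₁ = x * y := by
        rw [hinv₁, mul_assoc x b₁ y, hb₁ y, ← mul_assoc, mul_assoc, hbb₁, mul_one]
      rw [← e1]; exact hhom x b₁ y
    rw [key]
    have e2 : ∀ u v : X₂, u * b₂ * v * b₂ = u * v := by
      intro u v
      rw [mul_assoc u b₂ v, hb₂ v, ← mul_assoc, mul_assoc, hbb₂, mul_one]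
    rw [e2, show (h x * (h b₁)⁻¹ * b₂) * (h y * (h b₁)⁻¹ * b₂)
        = (h x * (h b₁)⁻¹) * b₂ * (h y * (h b₁)⁻¹) * b₂ from by group, e2,
      mul_assoc]
end

section
/- Let F((X₁,·),b₁) and F((X₂,*),b₂) be knot-theoretic flocks determined by groups (X₁,·), (X₂,*) and central elements b₁, b₂ with b₁·b₁ = e₁ and b₂*b₂ = e₂, and let h : X₁ → X₂ be an isomorphism of the ternary groupoids (h bijective with h([xyz]₁) = [h(x) h(y) h(z)]₂). Then for all x, y ∈ X₁ one has h(x·y) = h(x) * (h(b₁))⁻¹ * h(y) * b₂. -/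
/-- If h is an isomorphism of the ternary groupoids F((X₁,·),b₁) and F((X₂,*),b₂),
then h(x·y) = h(x) * (h(b₁))⁻¹ * h(y) * b₂. -/
theorem stmt_15 {X₁ X₂ : Type*} [Group X₁] [Group X₂] (b₁ : X₁) (b₂ : X₂)
    (hb₁ : ∀ x : X₁, b₁ * x = x * b₁) (hbb₁ : b₁ * b₁ = 1)
    (hb₂ : ∀ x : X₂, b₂ * x = x * b₂) (hbb₂ : b₂ * b₂ = 1)
    (h : X₁ → X₂) (hbij : Function.Bijective h)
    (hhom : ∀ x y z : X₁, h (x * y⁻¹ * z * b₁) = h x * (h y)⁻¹ * h z * b₂) :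
    ∀ x y : X₁, h (x * y) = h x * (h b₁)⁻¹ * h y * b₂ := by
  intro x y
  have := hhom x b₁ y
  have hc : x * b₁⁻¹ * y * b₁ = x * y := by
    have : b₁⁻¹ * y = y * b₁⁻¹ := by
      rw [inv_eq_of_mul_eq_one_left hbb₁]; exact (hb₁ y).symm ▸ hb₁ y
    calc x * b₁⁻¹ * y * b₁ = x * (b₁⁻¹ * y) * b₁ := by group
      _ = x * (y * b₁⁻¹) * b₁ := by rw [this]
      _ = x * y := by group
  rwa [hc] at this
end

section
/- Let (L,*) be an extra loop with identity e, let x ↦ x⁻¹ be its inverse map (satisfying the left and right inverse properties x⁻¹*(x*y) = y and (y*x)*x⁻¹ = y), and let k ∈ Z(L) be a central element with k*k = e. Then the ternary operation [xyz]₁ := ((x*y⁻¹)*z)*k satisfies the condition LN ([ab[bcd]]₁ = [a[abc]₁[[abc]₁cd]₁]₁ for all a,b,c,d, where the subscript 1 is used on every bracket) and the condition RN ([[abc]₁cd]₁ = [[ab[bcd]₁]₁[bcd]₁d]₁ for all a,b,c,d). -/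
/-- In an extra loop (L,*) with a central element k of order dividing two,
the operation [xyz]₁ := ((x*y⁻¹)*z)*k satisfies the conditions LN and RN. -/
theorem stmt_16 {L : Type*} (mul : L → L → L) (e : L) (inv : L → L) (k : L)
    (hide : ∀ x : L, mul x e = x ∧ mul e x = x)
    (hsolv : ∀ a b : L, (∃! z, mul a z = b) ∧ (∃! z, mul z a = b))
    (hextra : ∀ x y z : L, mul (mul x (mul y z)) y = mul (mul x y) (mul z y))
    (hlinv : ∀ x y : L, mul (inv x) (mul x y) = y)
    (hrinv : ∀ x y : L, mul (mul y x) (inv x) = y)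
    (hkcomm : ∀ x : L, mul k x = mul x k)
    (hkassoc₁ : ∀ x y : L, mul k (mul x y) = mul (mul k x) y)
    (hkassoc₂ : ∀ x y : L, mul x (mul k y) = mul (mul x k) y)
    (hkassoc₃ : ∀ x y : L, mul (mul x y) k = mul x (mul y k))
    (hkk : mul k k = e) :
    CondLN (fun x y z : L => mul (mul (mul x (inv y)) z) k) ∧
    CondRN (fun x y z : L => mul (mul (mul x (inv y)) z) k) := by
    have rid : ∀ x : L, mul x e = x := fun x => (hide x).1
    have lid : ∀ x : L, mul e x = x := fun x => (hide x).2
    have inv_r : ∀ x : L, mul x (inv x) = e := by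
      intro x
      have h := hrinv x e
      rwa [lid] at h
    have inv_l : ∀ x : L, mul (inv x) x = e := by
      intro x
      have h := hlinv x e
      rwa [rid] at h
    have inv_inv : ∀ x : L, inv (inv x) = x := by
      intro x
      have h := hlinv (inv x) x
      rwa [inv_l, rid] at h
    have LIP2 : ∀ x y : L, mul x (mul (inv x) y) = y := by
      intro x y
      have h := hlinv (inv x) y
      rwa [inv_inv] at h
    have RIP2 : ∀ x y : L, mul (mul y (inv x)) x = y := by
      intro x y
      have h := hrinv (inv x) y
      rwa [inv_inv] at h
    have antiaut : ∀ x y : L, inv (mul x y) = mul (inv y) (inv x) := by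
      intro x y
      have h1 : mul (inv (mul x y)) x = inv y := by
        have h := hlinv (mul x y) (inv y)
        rwa [hrinv y x] at h
      have h2 := hrinv x (inv (mul x y))
      rw [h1] at h2
      exact h2.symm
    have flex : ∀ y z : L, mul (mul y z) y = mul y (mul z y) := by
      intro y z
      have h := hextra e y z
      rwa [lid, lid] at h
    have E1' : ∀ x y z : L, mul x (mul (mul y x) z) = mul (mul x y) (mul x z) := by
      intro x y z
      have h := congrArg inv (hextra (inv z) (inv x) (inv y))
      simpa only [antiaut, inv_inv] using h
    have K : ∀ x y : L, mul (mul (inv x) (mul (mul x y) (inv x))) x = y := by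
      intro x y
      have h := flex (inv x) (mul x y)
      rw [hlinv x y] at h
      rw [← h, RIP2 x y]
    have step2 : ∀ x y z : L, mul (mul (mul x y) (inv x)) (mul x z) = mul x (mul y z) := by
      intro x y z
      have h := E1' x (mul (inv x) (mul (mul x y) (inv x))) z
      rw [K x y, LIP2 x (mul (mul x y) (inv x))] at h
      exact h.symm
    have MM : ∀ x y z : L, mul (mul x y) (mul z x) = mul (mul x (mul y z)) x := by
      intro x y z
      have h := hextra (mul (mul x y) (inv x)) x z
      rw [RIP2 x (mul x y), step2 x y z] at h
      exact h.symm
    have RA : ∀ u x : L, mul u (mul x x) = mul (mul u x) x := by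
      intro u x
      have h := MM x (mul (inv x) u) x
      rw [LIP2 x u, ← flex x (mul (inv x) u), LIP2 x u] at h
      exact h
    have LA : ∀ x y : L, mul (mul x x) y = mul x (mul x y) := by
      intro x y
      have h := congrArg inv (RA (inv y) (inv x))
      simpa only [antiaut, inv_inv] using h
    have lA : ∀ x y z : L, mul x (mul y z) = mul (mul x (mul y (inv x))) (mul x z) := by
      intro x y z
      have h := E1' x (mul y (inv x)) z
      rwa [RIP2 x y] at h
    have D4 : ∀ a b c : L, mul (mul a b) c = mul (mul a c) (mul (mul (inv c) b) c) := by
      intro a b c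
      have h := hextra a c (mul (inv c) b)
      rwa [LIP2 c b] at h
    have MD1 : ∀ t z x : L, mul t (mul z x) = mul (mul x (mul (mul (inv x) t) z)) x := by
      intro t z x
      have h := MM x (mul (inv x) t) z
      rwa [LIP2 x t] at h
    have MD1' : ∀ a b c : L, mul (mul a b) c = mul a (mul (mul b (mul c (inv a))) a) := by
      intro a b c
      have h := congrArg inv (MD1 (inv c) (inv b) (inv a))
      simpa only [antiaut, inv_inv] using h
    have F1 : ∀ r a s : L, mul (mul (mul r a) s) r = mul r (mul a (mul s r)) := by
      intro r a s
      calc (mul (mul (mul r a) s) r)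
        _ = (mul (mul r (mul (mul a (mul s (inv r))) r)) r) := by rw [MD1' r a s]; try simp only [inv_inv]
        _ = (mul (mul (mul r (mul a (mul s (inv r)))) r) r) := by rw [← flex r (mul a (mul s (inv r)))]; try simp only [inv_inv]
        _ = (mul (mul (mul (mul r (mul a (inv r))) (mul r (mul s (inv r)))) r) r) := by rw [lA r a (mul s (inv r))]; try simp only [inv_inv]
        _ = (mul (mul (mul (mul r (mul a (inv r))) r) (mul (mul s (inv r)) r)) r) := by rw [hextra (mul r (mul a (inv r))) r (mul s (inv r))]; try simp only [inv_inv]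
        _ = (mul (mul (mul (mul r (mul a (inv r))) r) s) r) := by rw [RIP2 r s]; try simp only [inv_inv]
        _ = (mul (mul (mul (mul (mul (inv r) (mul (mul r r) a)) (inv r)) r) s) r) := by rw [MD1 r a (inv r)]; try simp only [inv_inv]
        _ = (mul (mul (mul (inv r) (mul (mul r r) a)) s) r) := by rw [RIP2 r (mul (inv r) (mul (mul r r) a))]; try simp only [inv_inv]
        _ = (mul (mul (mul (mul a (mul (mul (inv a) (inv r)) (mul r r))) a) s) r) := by rw [MD1 (inv r) (mul r r) a]; try simp only [inv_inv]
        _ = (mul (mul (mul (mul a (mul (mul (mul (inv a) (inv r)) r) r)) a) s) r) := by rw [RA (mul (inv a) (inv r)) r]; try simp only [inv_inv]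
        _ = (mul (mul (mul (mul a (mul (inv a) r)) a) s) r) := by rw [RIP2 r (inv a)]; try simp only [inv_inv]
        _ = (mul (mul (mul (mul (mul a (mul (inv a) (inv a))) (mul a r)) a) s) r) := by rw [lA a (inv a) r]; try simp only [inv_inv]
        _ = (mul (mul (mul (mul (inv a) (mul a r)) a) s) r) := by rw [LIP2 a (inv a)]; try simp only [inv_inv]
        _ = (mul (mul (mul (inv a) (mul (mul (mul a r) (mul a a)) (inv a))) s) r) := by rw [MD1' (inv a) (mul a r) a]; try simp only [inv_inv]
        _ = (mul (mul (mul (inv a) (mul (mul (mul (mul a r) a) a) (inv a))) s) r) := by rw [RA (mul a r) a]; try simp only [inv_inv]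
        _ = (mul (mul (mul (inv a) (mul (mul a r) a)) s) r) := by rw [hrinv a (mul (mul a r) a)]; try simp only [inv_inv]
        _ = (mul (mul (inv a) (mul (mul (mul (mul a r) a) (mul s a)) (inv a))) r) := by rw [MD1' (inv a) (mul (mul a r) a) s]; try simp only [inv_inv]
        _ = (mul (mul (inv a) (mul (mul (mul (mul a r) (mul a s)) a) (inv a))) r) := by rw [← hextra (mul a r) a s]; try simp only [inv_inv]
        _ = (mul (mul (inv a) (mul (mul a r) (mul a s))) r) := by rw [hrinv a (mul (mul a r) (mul a s))]; try simp only [inv_inv]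
        _ = (mul (mul (inv a) (mul a (mul (mul r a) s))) r) := by rw [← E1' a r s]; try simp only [inv_inv]
        _ = (mul (inv a) (mul (mul (mul a (mul (mul r a) s)) (mul r a)) (inv a))) := by rw [MD1' (inv a) (mul a (mul (mul r a) s)) r]; try simp only [inv_inv]
        _ = (mul (inv a) (mul (mul (mul a (mul (mul (mul r a) s) r)) a) (inv a))) := by rw [MM a (mul (mul r a) s) r]; try simp only [inv_inv]
        _ = (mul (inv a) (mul (mul (mul a (mul (mul (mul r a) r) (mul (mul (inv r) s) r))) a) (inv a))) := by rw [D4 (mul r a) s r]; try simp only [inv_inv]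
        _ = (mul (inv a) (mul (mul (mul a (mul (mul r a) r)) (mul (mul (mul (inv r) s) r) a)) (inv a))) := by rw [← MM a (mul (mul r a) r) (mul (mul (inv r) s) r)]; try simp only [inv_inv]
        _ = (mul (inv a) (mul (mul (mul (mul a r) (mul a r)) (mul (mul (mul (inv r) s) r) a)) (inv a))) := by rw [E1' a r r]; try simp only [inv_inv]
        _ = (mul (inv a) (mul (mul (mul a r) (mul (mul a r) (mul (mul (mul (inv r) s) r) a))) (inv a))) := by rw [LA (mul a r) (mul (mul (mul (inv r) s) r) a)]; try simp only [inv_inv]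
        _ = (mul (inv a) (mul (mul (mul a r) (mul (mul a (mul r (mul (mul (inv r) s) r))) a)) (inv a))) := by rw [MM a r (mul (mul (inv r) s) r)]; try simp only [inv_inv]
        _ = (mul (inv a) (mul (mul (mul a (mul r (mul a (mul r (mul (mul (inv r) s) r))))) a) (inv a))) := by rw [MM a r (mul a (mul r (mul (mul (inv r) s) r)))]; try simp only [inv_inv]
        _ = (mul (inv a) (mul a (mul r (mul a (mul r (mul (mul (inv r) s) r)))))) := by rw [hrinv a (mul a (mul r (mul a (mul r (mul (mul (inv r) s) r)))))]; try simp only [inv_inv]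
        _ = (mul r (mul a (mul r (mul (mul (inv r) s) r)))) := by rw [hlinv a (mul r (mul a (mul r (mul (mul (inv r) s) r))))]; try simp only [inv_inv]
        _ = (mul r (mul a (mul (mul r (mul (inv r) s)) r))) := by rw [← flex r (mul (inv r) s)]; try simp only [inv_inv]
        _ = (mul r (mul a (mul s r))) := by rw [LIP2 r s]; try simp only [inv_inv]
    have inv_k : inv k = k := by
      have h := hlinv k k
      rwa [hkk, rid] at h
    have lemA : ∀ x : L, mul (mul x k) k = x := by
      intro x
      rw [hkassoc₃ x k, hkk, rid]
    have lemC : ∀ x y : L, mul (mul x k) y = mul (mul x y) k := by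
      intro x y
      rw [← hkassoc₂ x y, hkcomm y, ← hkassoc₃ x y]
    have lemD : ∀ x : L, inv (mul x k) = mul (inv x) k := by
      intro x
      rw [antiaut x k, inv_k, hkcomm (inv x)]
    constructor
    · intro a b c d
      show mul (mul (mul a (inv b)) (mul (mul (mul b (inv c)) d) k)) k =
        mul (mul (mul a (inv (mul (mul (mul a (inv b)) c) k)))
              (mul (mul (mul (mul (mul (mul a (inv b)) c) k) (inv c)) d) k)) k
      have hu : inv (mul (mul (mul a (inv b)) c) k)
          = mul (mul (inv c) (mul b (inv a))) k := by
        rw [lemD (mul (mul a (inv b)) c), antiaut (mul a (inv b)) c,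
          antiaut a (inv b), inv_inv b]
      have hts : mul (mul (mul (mul (mul (mul a (inv b)) c) k) (inv c)) d) k
          = mul (mul a (inv b)) d := by
        rw [lemC (mul (mul a (inv b)) c) (inv c), hrinv c (mul a (inv b)),
          lemC (mul a (inv b)) d, lemA (mul (mul a (inv b)) d)]
      rw [hu, hts]
      rw [← hkassoc₃ (mul a (inv b)) (mul (mul b (inv c)) d),
        lemA (mul (mul a (inv b)) (mul (mul b (inv c)) d))]
      rw [← hkassoc₃ a (mul (inv c) (mul b (inv a)))]
      rw [lemC (mul a (mul (inv c) (mul b (inv a)))) (mul (mul a (inv b)) d)]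
      rw [lemA (mul (mul a (mul (inv c) (mul b (inv a)))) (mul (mul a (inv b)) d))]
      have hinvP : inv (mul a (inv b)) = mul b (inv a) := by
        rw [antiaut a (inv b), inv_inv b]
      have h6 : mul a (mul (inv c) (mul b (inv a)))
          = mul (mul a (inv b)) (mul (mul b (inv c)) (inv (mul a (inv b)))) := by
        have hF := F1 (mul b (inv a)) a (inv c)
        rw [RIP2 a b] at hF
        rw [hinvP, hF]
        have h7 : mul (mul a (inv b))
            (mul (mul b (inv a)) (mul a (mul (inv c) (mul b (inv a)))))
            = mul a (mul (inv c) (mul b (inv a))) := by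
          rw [← hinvP]
          exact LIP2 (mul a (inv b)) (mul a (mul (inv c) (inv (mul a (inv b)))))
        exact h7.symm
      rw [h6]
      exact lA (mul a (inv b)) (mul b (inv c)) d
    · intro a b c d
      show mul (mul (mul (mul (mul (mul a (inv b)) c) k) (inv c)) d) k =
        mul (mul (mul (mul (mul (mul a (inv b)) (mul (mul (mul b (inv c)) d) k)) k)
                (inv (mul (mul (mul b (inv c)) d) k))) d) k
      have h1 : mul (mul (mul a (inv b)) (mul (mul (mul b (inv c)) d) k)) k
          = mul (mul a (inv b)) (mul (mul b (inv c)) d) := by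
        rw [← hkassoc₃ (mul a (inv b)) (mul (mul b (inv c)) d),
          lemA (mul (mul a (inv b)) (mul (mul b (inv c)) d))]
      rw [h1, lemD (mul (mul b (inv c)) d)]
      rw [← hkassoc₃ (mul (mul a (inv b)) (mul (mul b (inv c)) d))
            (inv (mul (mul b (inv c)) d))]
      rw [hrinv (mul (mul b (inv c)) d) (mul a (inv b))]
      rw [lemC (mul (mul a (inv b)) c) (inv c), hrinv c (mul a (inv b))]
end

section
/- Let (L,*) be an extra loop with identity e, let x ↦ x⁻¹ be its inverse map (satisfying the left and right inverse properties x⁻¹*(x*y) = y and (y*x)*x⁻¹ = y), and let k ∈ Z(L) be a central element with k*k = e. Then the ternary operation [xyz]₂ := (x*(y⁻¹*z))*k satisfies the condition LN ([ab[bcd]]₂ = [a[abc]₂[[abc]₂cd]₂]₂ for all a,b,c,d) and the condition RN ([[abc]₂cd]₂ = [[ab[bcd]₂]₂[bcd]₂d]₂ for all a,b,c,d). -/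
/-- In an extra loop (L,*) with a central element k of order dividing two,
the operation [xyz]₂ := (x*(y⁻¹*z))*k satisfies the conditions LN and RN. -/
theorem stmt_17 {L : Type*} (mul : L → L → L) (e : L) (inv : L → L) (k : L)
    (hide : ∀ x : L, mul x e = x ∧ mul e x = x)
    (hsolv : ∀ a b : L, (∃! z, mul a z = b) ∧ (∃! z, mul z a = b))
    (hextra : ∀ x y z : L, mul (mul x (mul y z)) y = mul (mul x y) (mul z y))
    (hlinv : ∀ x y : L, mul (inv x) (mul x y) = y)
    (hrinv : ∀ x y : L, mul (mul y x) (inv x) = y)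
    (hkcomm : ∀ x : L, mul k x = mul x k)
    (hkassoc₁ : ∀ x y : L, mul k (mul x y) = mul (mul k x) y)
    (hkassoc₂ : ∀ x y : L, mul x (mul k y) = mul (mul x k) y)
    (hkassoc₃ : ∀ x y : L, mul (mul x y) k = mul x (mul y k))
    (hkk : mul k k = e) :
    CondLN (fun x y z : L => mul (mul x (mul (inv y) z)) k) ∧
    CondRN (fun x y z : L => mul (mul x (mul (inv y) z)) k) := by
  have h_mul_e : ∀ x : L, mul x e = x := fun x => (hide x).1
  have h_e_mul : ∀ x : L, mul e x = x := fun x => (hide x).2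
  have hxinv : ∀ x : L, mul (inv x) x = e := fun x => by
    have h := hlinv x e; rwa [h_mul_e] at h
  have hxinv' : ∀ x : L, mul x (inv x) = e := fun x => by
    have h := hrinv x e; rwa [h_e_mul] at h
  have hinvinv : ∀ x : L, inv (inv x) = x := fun x =>
    ExistsUnique.unique (hsolv (inv x) e).2 (hxinv (inv x)) (hxinv' x)
  have hlinv' : ∀ x y : L, mul x (mul (inv x) y) = y := fun x y => by
    have h := hlinv (inv x) y; rwa [hinvinv] at h
  have kA : ∀ x y : L, mul (mul x k) y = mul x (mul k y) := fun x y => (hkassoc₂ x y).symm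
  have kB : ∀ x y : L, mul x (mul y k) = mul (mul x y) k := fun x y => (hkassoc₃ x y).symm
  have kk_cancel : ∀ x : L, mul (mul x k) k = x := fun x => by
    rw [hkassoc₃, hkk, h_mul_e]
  have inv_k : ∀ u : L, inv (mul u k) = mul (inv u) k := by
    intro u
    have h : mul (mul (inv u) k) (mul u k) = e := by
      rw [kA, hkassoc₁, hkcomm u, kk_cancel, hxinv]
    exact ExistsUnique.unique (hsolv (mul u k) e).2 (hxinv (mul u k)) h
  -- key lemma: (a * (b⁻¹ * c)) * s = (a*s) * ((b*s)⁻¹ * (c*s))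
  have star : ∀ a b c s : L, mul (mul a (mul (inv b) c)) s
      = mul (mul a s) (mul (inv (mul b s)) (mul c s)) := by
    intro a b c s
    have key : mul (inv (mul b s)) (mul c s)
        = mul (mul (inv s) (mul (inv b) c)) s := by
      have h1 := hextra b s (mul (inv s) (mul (inv b) c))
      rw [hlinv' s, hlinv' b] at h1
      exact ExistsUnique.unique (hsolv (mul b s) (mul c s)).1 (hlinv' _ _) h1.symm
    have h3 := hextra a s (mul (inv s) (mul (inv b) c))
    rw [hlinv' s] at h3
    rw [h3, key]
  -- T1 : collapse t a b (t b X-shape)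
  have T1 : ∀ a b X : L,
      mul (mul a (mul (inv b) (mul (mul b X) k))) k = mul a X := by
    intro a b X
    rw [kB (inv b), hlinv, kB a, kk_cancel]
  have T2 : ∀ u Y : L, mul (mul (mul u k) Y) k = mul u Y := by
    intro u Y
    rw [kA u Y, hkcomm Y, kB u, kk_cancel]
  have T3 : ∀ a u Y : L,
      mul (mul a (mul (inv (mul u k)) (mul u Y))) k = mul a Y := by
    intro a u Y
    rw [inv_k u, kA (inv u) (mul u Y), hkcomm (mul u Y), hkassoc₃ u Y, hlinv u, kB a Y, kk_cancel]
  have T4 : ∀ p w d : L,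
      mul (mul p (mul (inv (mul w k)) d)) k = mul p (mul (inv w) d) := by
    intro p w d
    rw [inv_k w, kA (inv w) d, hkcomm d, kB (inv w) d, kB p, kk_cancel]
  constructor
  · intro a b c d
    simp only []
    rw [T1 a b (mul (inv c) d), T2 (mul a (mul (inv b) c)) (mul (inv c) d),
      T3 a (mul a (mul (inv b) c)) (mul (inv c) d)]
  · intro a b c d
    simp only []
    rw [T2 (mul a (mul (inv b) c)) (mul (inv c) d), T1 a b (mul (inv c) d),
      T4 (mul a (mul (inv c) d)) (mul b (mul (inv c) d)) d]
    have hd : d = mul c (mul (inv c) d) := (hlinv' c d).symm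
    calc mul (mul a (mul (inv b) c)) (mul (inv c) d)
        = mul (mul a (mul (inv c) d))
            (mul (inv (mul b (mul (inv c) d))) (mul c (mul (inv c) d))) :=
          star a b c (mul (inv c) d)
      _ = mul (mul a (mul (inv c) d))
            (mul (inv (mul b (mul (inv c) d))) d) := by rw [hlinv' c d]
end

section
/- Let (L,*) be an extra loop with identity e, let x ↦ x⁻¹ be its inverse map (satisfying the left and right inverse properties x⁻¹*(x*y) = y and (y*x)*x⁻¹ = y), and let k ∈ Z(L) be a central element with k*k = e. Then the ternary operation [xyz]₁ := ((x*y⁻¹)*z)*k satisfies, for all a, b, c ∈ L, the equalities [[abc]₁cb]₁ = a, [c[abc]₁a]₁ = b, and [ba[abc]₁]₁ = c. -/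
/-- In an extra loop (L,*) with a central element k of order dividing two, the
operation [xyz]₁ := ((x*y⁻¹)*z)*k satisfies [[abc]₁cb]₁ = a, [c[abc]₁a]₁ = b,
and [ba[abc]₁]₁ = c.  (Here the expressions are written out explicitly.) -/
theorem stmt_18 {L : Type*} (mul : L → L → L) (e : L) (inv : L → L) (k : L)
    (hide : ∀ x : L, mul x e = x ∧ mul e x = x)
    (hsolv : ∀ a b : L, (∃! z, mul a z = b) ∧ (∃! z, mul z a = b))
    (hextra : ∀ x y z : L, mul (mul x (mul y z)) y = mul (mul x y) (mul z y))
    (hlinv : ∀ x y : L, mul (inv x) (mul x y) = y)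
    (hrinv : ∀ x y : L, mul (mul y x) (inv x) = y)
    (hkcomm : ∀ x : L, mul k x = mul x k)
    (hkassoc₁ : ∀ x y : L, mul k (mul x y) = mul (mul k x) y)
    (hkassoc₂ : ∀ x y : L, mul x (mul k y) = mul (mul x k) y)
    (hkassoc₃ : ∀ x y : L, mul (mul x y) k = mul x (mul y k))
    (hkk : mul k k = e) :
    ∀ a b c : L,
      mul (mul (mul (mul (mul (mul a (inv b)) c) k) (inv c)) b) k = a ∧
      mul (mul (mul c (inv (mul (mul (mul a (inv b)) c) k))) a) k = b ∧
      mul (mul (mul b (inv a)) (mul (mul (mul a (inv b)) c) k)) k = c := by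
  have hxe : ∀ x, mul x e = x := fun x => (hide x).1
  have hex : ∀ x, mul e x = x := fun x => (hide x).2
  have hinvx : ∀ x, mul (inv x) x = e := fun x => by
    have := hlinv x e; rwa [hxe] at this
  have hxinv : ∀ x, mul x (inv x) = e := fun x => by
    have := hrinv x e; rwa [hex] at this
  have hinvinv : ∀ x, inv (inv x) = x := fun x => by
    obtain ⟨z, hz, huniq⟩ := (hsolv (inv x) e).1
    exact (huniq _ (hxinv (inv x))).trans (huniq x (hinvx x)).symm
  have hlinv' : ∀ x y, mul x (mul (inv x) y) = y := fun x y => by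
    have := hlinv (inv x) y; rwa [hinvinv] at this
  have hrinv' : ∀ x y, mul (mul y (inv x)) x = y := fun x y => by
    have := hrinv (inv x) y; rwa [hinvinv] at this
  have hinvmul : ∀ x y, inv (mul x y) = mul (inv y) (inv x) := fun x y => by
    have h1 : mul (mul x y) (inv y) = x := hrinv y x
    have h2 : mul (inv (mul x y)) x = inv y := by
      have := hlinv (mul x y) (inv y); rwa [h1] at this
    have h3 := hrinv x (inv (mul x y))
    rw [h2] at h3
    exact h3.symm
  have hinvk : inv k = k := by
    obtain ⟨z, hz, huniq⟩ := (hsolv k e).2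
    exact (huniq _ (hinvx k)).trans (huniq k hkk).symm
  have slide : ∀ x y, mul (mul x k) y = mul (mul x y) k := fun x y => by
    rw [← hkassoc₂, hkcomm, ← hkassoc₃]
  have slide' : ∀ x y, mul x (mul y k) = mul (mul x y) k := fun x y => by
    rw [← hkcomm, hkassoc₂, slide]
  intro a b c
  refine ⟨?_, ?_, ?_⟩
  · rw [slide, slide, hkassoc₃, hkk, hxe, hrinv, hrinv']
  · rw [hinvmul, hinvk, hkcomm, hinvmul, slide', slide, hkassoc₃, hkk, hxe,
      hlinv', hinvmul, hinvinv, hrinv']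
  · rw [slide', hkassoc₃, hkk, hxe]
    have h : mul b (inv a) = inv (mul a (inv b)) := by rw [hinvmul, hinvinv]
    rw [h, hlinv]
end

section
/- In any knot-theoretic flock (X,[ ]), for all a, b, c ∈ X the following equalities hold: [[abc]cb] = a, [c[abc]a] = b, and [ba[abc]] = c. -/
/-- In any knot-theoretic flock, [[abc]cb] = a, [c[abc]a] = b, and [ba[abc]] = c. -/
theorem stmt_19 {X : Type*} (t : X → X → X → X)
    (hQ : TernaryQuasigroup t) (hP : ParaAssoc t)
    (hLN : CondLN t) (hRN : CondRN t) :
    ∀ a b c : X, t (t a b c) c b = a ∧ t c (t a b c) a = b ∧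
      t b a (t a b c) = c := by
  classical
  have cl : ∀ (a b : X) {z z' : X}, t z a b = t z' a b → z = z' := fun a b z z' h =>
    ((hQ a b (t z' a b)).1).unique h rfl
  have cm : ∀ (a b : X) {z z' : X}, t a z b = t a z' b → z = z' := fun a b z z' h =>
    ((hQ a b (t a z' b)).2.1).unique h rfl
  have cr : ∀ (a b : X) {z z' : X}, t a b z = t a b z' → z = z' := fun a b z z' h =>
    ((hQ a b (t a b z')).2.2).unique h rfl
  have p1 : ∀ a b c d e : X, t (t a b c) d e = t a (t d c b) e := fun a b c d e =>
    (hP a b c d e).1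
  have p3 : ∀ a b c d e : X, t (t a b c) d e = t a b (t c d e) := fun a b c d e =>
    (hP a b c d e).1.trans (hP a b c d e).2
  have hE : ∀ b : X, ∃ z, t b b z = b := fun b => ((hQ b b b).2.2).exists
  choose e he using hE
  -- R1 : t y b (e b) = y
  have R1 : ∀ b y : X, t y b (e b) = y := by
    intro b y
    obtain ⟨x, hx⟩ : ∃ x, t x b b = y := ((hQ b b y).1).exists
    rw [← hx, p3, he]
  -- R2 : t y (e b) b = y
  have R2 : ∀ b y : X, t y (e b) b = y := by
    intro b d
    have h := p1 b b (e b) d b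
    rw [R1] at h
    exact (cm b b h.symm)
  -- R4 : t (e b) b v = v
  have R4 : ∀ b v : X, t (e b) b v = v := by
    intro b v
    have h := p3 b b (e b) b v
    rw [R1] at h
    exact (cr b b h.symm)
  -- R3 : t b (e b) v = v
  have R3 : ∀ b v : X, t b (e b) v = v := by
    intro b v
    have h := p3 b (e b) b (e b) v
    rw [R2] at h
    exact (cr b (e b) h.symm)
  -- R5 : t a c c = e a
  have R5 : ∀ a c : X, t a c c = e a := by
    intro a c
    have h := hLN a (e a) c c
    rw [R3, R3] at h
    -- h : t (e a) c c = t a c (t c c c)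
    have h2 := p3 a c c c c
    -- h2 : t (t a c c) c c = t a c (t c c c)
    exact (cl c c (h2.trans h.symm))
  -- R6 : e (e a) = a
  have R6 : ∀ a : X, e (e a) = a := by
    intro a
    have h := R5 (e a) a
    rw [R4] at h
    exact h.symm
  -- Rstar : t a b (e d) = t (e a) b d
  have Rstar : ∀ a b d : X, t a b (e d) = t (e a) b d := by
    intro a b d
    have h := hRN a b (e d) d
    rw [R2 d b] at h
    -- h : t (t a b (e d)) (e d) d = t (t a b b) b d
    rw [R2 d (t a b (e d)), R5 a b] at h
    exact h
  -- R7 : t c c d = e d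
  have R7 : ∀ c d : X, t c c d = e d := by
    intro c d
    have h : t c c d = t c c (e (e d)) := by rw [R6]
    rw [Rstar c c (e d), R4 c (e d)] at h
    exact h
  intro a b c
  refine ⟨?_, ?_, ?_⟩
  · rw [p1, R7, R2]
  · have h := p1 c c b a a
    rw [R7 c b] at h
    -- h : t (e b) a a = t c (t a b c) a
    rw [← h, R5, R6]
  · have h := p3 b a a b c
    rw [R5 b a] at h
    -- h : t (e b) b c = t b a (t a b c)
    rw [← h, R4]
end
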